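/- arXiv:1309.4384 — 2 statements merged into one kernel-verified Lean document; each statement's English description precedes it below -/
import Mathlib

section
/- Let f : Z_p → Q_p be a continuous function and let p be an odd prime. If the Volkenborn integral ∫_{Z_p} f(a) da := lim_{N→∞} p^{-N} Σ_{a=0}^{p^N - 1} f(a) exists for f(a) = a^k with k a nonnegative integer, then its value equals the k-th Bernoulli number B_k. -/
/-!
By Faulhaber's formula, `n⁻¹ * ∑_{a<n} a^k` is `B_k` plus a polynomial in `n` without constant
term. Along `n = p^N` we have `n → 0` in `ℚ_[p]`, so these averages converge to `B_k`.
-/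

open Filter Topology Finset

theorem inv_mul_sum_range_pow_eq_bernoulli_add (k : ℕ) {n : ℕ} (hn : n ≠ 0) :
    (n : ℚ)⁻¹ * ∑ a ∈ range n, (a : ℚ) ^ k =
      bernoulli k +
        ∑ i ∈ range k, bernoulli i * (k + 1).choose i / (k + 1) * (n : ℚ) ^ (k - i) := by
  rw [sum_range_pow, sum_range_succ, mul_add, mul_sum, add_comm (bernoulli k)]
  congr 1
  · refine sum_congr rfl fun i hi => ?_
    rw [show k + 1 - i = k - i + 1 by have := mem_range.mp hi; omega, pow_succ]
    field_simp
  · rw [Nat.choose_succ_self_right, Nat.add_sub_cancel_left, pow_one]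
    push_cast
    field_simp

theorem tendsto_inv_mul_sum_range_pow_bernoulli {R : Type*} [Field R] [CharZero R]
    [TopologicalSpace R] [IsTopologicalRing R] (k : ℕ) {n : ℕ → ℕ} (hn : ∀ N, n N ≠ 0)
    (h : Tendsto (fun N => (n N : R)) atTop (𝓝 0)) :
    Tendsto (fun N => (n N : R)⁻¹ * ∑ a ∈ range (n N), (a : R) ^ k) atTop
      (𝓝 (bernoulli k : R)) := by
  have hfaulhaber : ∀ N, (n N : R)⁻¹ * ∑ a ∈ range (n N), (a : R) ^ k =
      bernoulli k + ∑ i ∈ range k,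
        ((bernoulli i * (k + 1).choose i / (k + 1) : ℚ) : R) * (n N : R) ^ (k - i) := by
    intro N
    have := congrArg (Rat.cast : ℚ → R) (inv_mul_sum_range_pow_eq_bernoulli_add k (hn N))
    simpa only [Rat.cast_add, Rat.cast_mul, Rat.cast_sum, Rat.cast_inv, Rat.cast_pow,
      Rat.cast_natCast] using this
  have hlower : Tendsto (fun N => ∑ i ∈ range k,
      ((bernoulli i * (k + 1).choose i / (k + 1) : ℚ) : R) * (n N : R) ^ (k - i))
      atTop (𝓝 0) := by
    rw [← sum_const_zero (s := range k)]
    refine tendsto_finsetSum _ fun i hi => ?_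
    simpa [zero_pow (Nat.sub_ne_zero_of_lt (mem_range.mp hi))] using
      (h.pow (k - i)).const_mul _
  simp only [hfaulhaber]
  simpa using hlower.const_add (bernoulli k : R)

theorem tendsto_natCast_prime_pow_padic (p : ℕ) [Fact p.Prime] :
    Tendsto (fun N : ℕ => ((p ^ N : ℕ) : ℚ_[p])) atTop (𝓝 0) := by
  simpa only [Nat.cast_pow] using tendsto_pow_atTop_nhds_zero_of_norm_lt_one Padic.norm_p_lt_one

theorem volkenborn_integral_pow_eq_bernoulli_general (p : ℕ) [Fact p.Prime]
    (k : ℕ) (L : ℚ_[p])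
    (h : Tendsto
      (fun N : ℕ => ((p : ℚ_[p]) ^ N)⁻¹ * ∑ a ∈ Finset.range (p ^ N), (a : ℚ_[p]) ^ k)
      atTop (𝓝 L)) :
    L = ((bernoulli k : ℚ) : ℚ_[p]) := by
  have hlim := tendsto_inv_mul_sum_range_pow_bernoulli k
    (fun N => pow_ne_zero N (Fact.out : p.Prime).ne_zero) (tendsto_natCast_prime_pow_padic p)
  exact tendsto_nhds_unique h (by simpa only [Nat.cast_pow] using hlim)

/-- If the Volkenborn integral `∫_{ℤ_p} a^k da = lim_N p^{-N} Σ_{a=0}^{p^N-1} a^k` exists,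
then its value is the `k`-th Bernoulli number `B_k` (with the convention `B₁ = -1/2`). -/
theorem volkenborn_integral_pow_eq_bernoulli (p : ℕ) [Fact p.Prime] (hp : Odd p)
    (k : ℕ) (L : ℚ_[p])
    (h : Tendsto
      (fun N : ℕ => ((p : ℚ_[p]) ^ N)⁻¹ * ∑ a ∈ Finset.range (p ^ N), (a : ℚ_[p]) ^ k)
      atTop (𝓝 L)) :
    L = ((bernoulli k : ℚ) : ℚ_[p]) :=
  volkenborn_integral_pow_eq_bernoulli_general p k L h
end

section
/- Let p be an odd prime, s ∈ Z_p, and x, y ∈ C_p^× with |x - y|_p < |y|_p and v_p(x) = v_p(y) = 0. Then |⟨x⟩^s - ⟨y⟩^s|_p ≤ |x - y|_p; in particular x ↦ ⟨x⟩^s is Lipschitz continuous (with constant 1) on each disc {x : |x-y|_p < |y|_p} with |y|_p = 1. -/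
open Filter Topology

/-- The Teichmüller representative of `x ∈ ℤ_[p]`, `x̂ = lim_n x^(p^(n!))`. -/
noncomputable def teich (p : ℕ) [Fact p.Prime] (x : ℤ_[p]) : ℤ_[p] :=
  limUnder atTop (fun n : ℕ => x ^ p ^ (Nat.factorial n))

/-- The generalized binomial coefficient `C(s, n)` in `ℚ_[p]`. -/
noncomputable def padicBinom (p : ℕ) [Fact p.Prime] (s : ℚ_[p]) (n : ℕ) : ℚ_[p] :=
  (∏ i ∈ Finset.range n, (s - i)) / (Nat.factorial n : ℚ_[p])

/-- `t ^ s`, defined by the binomial series. -/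
noncomputable def padicPow (p : ℕ) [Fact p.Prime] (s : ℤ_[p]) (t : ℚ_[p]) : ℚ_[p] :=
  ∑' n : ℕ, padicBinom p (s : ℚ_[p]) n * (t - 1) ^ n

/-! The Teichmüller representative `x̂` is the limit of `x ^ p ^ n`. Since `p ∣ x - y` forces
`p ^ (n + 1) ∣ x ^ p ^ n - y ^ p ^ n`, `x̂` depends only on `x mod p`, and `x̂ ≡ x mod p`. So for
`x` close to the unit `y`, both `⟨x⟩` and `⟨y⟩` are obtained by dividing by the same unit `ŷ`,
and both lie in `1 + pℤ_p`. There the binomial series is 1-Lipschitz: its coefficients `C(s, n)`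
are `p`-adic integers (`ℤ_[p]` is a binomial ring), and `‖a ^ n - b ^ n‖ ≤ ‖a - b‖` on the closed unit
ball of an ultrametric ring. -/

lemma norm_pow_sub_pow_le_norm_sub {R : Type*} [NormedRing R] [NormOneClass R]
    [IsUltrametricDist R] {a b : R} (ha : ‖a‖ ≤ 1) (hb : ‖b‖ ≤ 1) (n : ℕ) :
    ‖a ^ n - b ^ n‖ ≤ ‖a - b‖ := by
  induction n with
  | zero => simp
  | succ n ih =>
    have hbn : ‖b ^ n‖ ≤ 1 := (norm_pow_le b n).trans (pow_le_one₀ (norm_nonneg b) hb)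
    calc ‖a ^ (n + 1) - b ^ (n + 1)‖ = ‖a * (a ^ n - b ^ n) + (a - b) * b ^ n‖ := by
          congr 1
          rw [mul_sub, sub_mul, ← pow_succ', ← pow_succ']
          abel
      _ ≤ max (‖a‖ * ‖a ^ n - b ^ n‖) (‖a - b‖ * ‖b ^ n‖) :=
          (IsUltrametricDist.norm_add_le_max _ _).trans
            (max_le_max (norm_mul_le _ _) (norm_mul_le _ _))
      _ ≤ ‖a - b‖ :=
          max_le ((mul_le_of_le_one_left (norm_nonneg _) ha).trans ih)
            (mul_le_of_le_one_right (norm_nonneg _) hbn)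

namespace PadicInt

variable {p : ℕ} [Fact p.Prime]

lemma tendsto_zero_of_forall_pow_dvd {z : ℕ → ℤ_[p]} (h : ∀ n, (p : ℤ_[p]) ^ n ∣ z n) :
    Tendsto z atTop (𝓝 0) := by
  have hp : Tendsto (fun n => ‖(p : ℤ_[p]) ^ n‖) atTop (𝓝 0) := by
    simpa using (tendsto_pow_atTop_nhds_zero_of_norm_lt_one
      ((norm_lt_one_iff_dvd (p : ℤ_[p])).2 dvd_rfl)).norm
  refine squeeze_zero_norm (fun n => ?_) hp
  obtain ⟨c, hc⟩ := h n
  rw [hc, norm_mul]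
  exact mul_le_of_le_one_right (norm_nonneg _) (norm_le_one c)

lemma dvd_pow_prime_pow_sub_self (x : ℤ_[p]) (n : ℕ) : (p : ℤ_[p]) ∣ x ^ p ^ n - x := by
  rw [← Ideal.mem_span_singleton, ← maximalIdeal_eq_span_p, ← ker_toZMod, RingHom.mem_ker,
    map_sub, map_pow, ZMod.pow_card_pow, sub_self]

lemma tendsto_pow_prime_pow_sub_pow_prime_pow {x y : ℤ_[p]} (h : (p : ℤ_[p]) ∣ x - y) :
    Tendsto (fun n => x ^ p ^ n - y ^ p ^ n) atTop (𝓝 0) :=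
  tendsto_zero_of_forall_pow_dvd fun n =>
    (pow_dvd_pow _ n.le_succ).trans (dvd_sub_pow_of_dvd_sub h n)

lemma cauchySeq_pow_prime_pow (x : ℤ_[p]) : CauchySeq fun n => x ^ p ^ n := by
  apply NonarchimedeanAddGroup.cauchySeq_of_tendsto_sub_nhds_zero
  simpa only [pow_succ', pow_mul] using
    tendsto_pow_prime_pow_sub_pow_prime_pow (by simpa using dvd_pow_prime_pow_sub_self x 1)

end PadicInt

section Teichmuller

variable {p : ℕ} [Fact p.Prime]

lemma tendsto_pow_prime_pow_teich (x : ℤ_[p]) :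
    Tendsto (fun n => x ^ p ^ n) atTop (𝓝 (teich p x)) := by
  obtain ⟨L, hL⟩ := cauchySeq_tendsto_of_complete (PadicInt.cauchySeq_pow_prime_pow x)
  have hfac : Tendsto Nat.factorial atTop atTop :=
    tendsto_atTop_mono Nat.self_le_factorial tendsto_id
  have hteich : teich p x = L := (hL.comp hfac).limUnder_eq
  rwa [hteich]

lemma teich_eq_of_norm_sub_lt_one {x y : ℤ_[p]} (h : ‖x - y‖ < 1) : teich p x = teich p y :=
  sub_eq_zero.1 <| tendsto_nhds_unique
    ((tendsto_pow_prime_pow_teich x).sub (tendsto_pow_prime_pow_teich y))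
    (PadicInt.tendsto_pow_prime_pow_sub_pow_prime_pow ((PadicInt.norm_lt_one_iff_dvd _).1 h))

lemma norm_sub_teich_lt_one (x : ℤ_[p]) : ‖x - teich p x‖ < 1 := by
  rw [← mem_ball_iff_norm']
  refine (IsUltrametricDist.isClosed_ball x 1).mem_of_tendsto (tendsto_pow_prime_pow_teich x)
    (Eventually.of_forall fun n => ?_)
  rw [mem_ball_iff_norm, PadicInt.norm_lt_one_iff_dvd]
  exact PadicInt.dvd_pow_prime_pow_sub_self x n

lemma norm_teich {x : ℤ_[p]} (hx : ‖x‖ = 1) : ‖teich p x‖ = 1 := by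
  have h := PadicInt.norm_eq_of_norm_add_lt_left (z1 := x) (z2 := -teich p x)
    (by rw [← sub_eq_add_neg, hx]; exact norm_sub_teich_lt_one x)
  rwa [norm_neg, hx, eq_comm] at h

end Teichmuller

section BinomialSeries

variable {p : ℕ} [Fact p.Prime]

lemma padicBinom_eq_choose (s : ℤ_[p]) (n : ℕ) :
    padicBinom p s n = (Ring.choose s n : ℤ_[p]) := by
  change padicBinom p (PadicInt.Coe.ringHom s) n = PadicInt.Coe.ringHom (Ring.choose s n)
  rw [Ring.map_choose, Ring.choose_eq_smul, padicBinom, ← descPochhammer_eval_eq_prod_range,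
    ← Polynomial.aeval_eq_smeval, Polynomial.aeval_def, Polynomial.eval₂_eq_eval_map,
    descPochhammer_map, smul_eq_mul, div_eq_inv_mul]

lemma norm_padicBinom_le_one (s : ℤ_[p]) (n : ℕ) : ‖padicBinom p s n‖ ≤ 1 := by
  rw [padicBinom_eq_choose, PadicInt.padic_norm_e_of_padicInt]
  exact PadicInt.norm_le_one _

lemma summable_padicBinom_mul_pow (s : ℤ_[p]) {z : ℚ_[p]} (hz : ‖z‖ < 1) :
    Summable fun n => padicBinom p s n * z ^ n := by
  apply NonarchimedeanAddGroup.summable_of_tendsto_cofinite_zero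
  rw [Nat.cofinite_eq_atTop]
  refine squeeze_zero_norm (fun n => ?_)
    (tendsto_pow_atTop_nhds_zero_of_lt_one (norm_nonneg z) hz)
  rw [norm_mul, norm_pow]
  exact mul_le_of_le_one_left (by positivity) (norm_padicBinom_le_one s n)

lemma norm_padicPow_sub_le (s : ℤ_[p]) {t u : ℚ_[p]} (ht : ‖t - 1‖ < 1) (hu : ‖u - 1‖ < 1) :
    ‖padicPow p s t - padicPow p s u‖ ≤ ‖t - u‖ := by
  rw [padicPow, padicPow,
    ← (summable_padicBinom_mul_pow s ht).tsum_sub (summable_padicBinom_mul_pow s hu)]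
  refine IsUltrametricDist.norm_tsum_le_of_forall_le_of_nonneg (norm_nonneg _) fun n => ?_
  rw [← mul_sub, norm_mul, ← sub_sub_sub_cancel_right t u 1]
  exact (mul_le_of_le_one_left (norm_nonneg _) (norm_padicBinom_le_one s n)).trans
    (norm_pow_sub_pow_le_norm_sub ht.le hu.le n)

lemma norm_coe_div_sub_coe_div {z w T : ℤ_[p]} (hT : ‖T‖ = 1) :
    ‖(z : ℚ_[p]) / T - (w : ℚ_[p]) / T‖ = ‖z - w‖ := by
  rw [← sub_div, norm_div, ← PadicInt.coe_sub, PadicInt.padic_norm_e_of_padicInt,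
    PadicInt.padic_norm_e_of_padicInt, hT, div_one]

end BinomialSeries

theorem proj_pow_lipschitz_general (p : ℕ) [Fact p.Prime]
    (s : ℤ_[p]) (x y : ℤ_[p]) (hy : ‖y‖ = 1) (hxy : ‖x - y‖ < ‖y‖) :
    ‖padicPow p s ((x : ℚ_[p]) / ((teich p x) : ℚ_[p])) -
        padicPow p s ((y : ℚ_[p]) / ((teich p y) : ℚ_[p]))‖ ≤ ‖x - y‖ := by
  rw [hy] at hxy
  rw [teich_eq_of_norm_sub_lt_one hxy]
  set T := teich p y
  have hyT : ‖y - T‖ < 1 := norm_sub_teich_lt_one y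
  have hxT : ‖x - T‖ < 1 := by simpa using PadicInt.norm_lt_one_add hxy hyT
  have hT : ‖T‖ = 1 := norm_teich hy
  have hT0 : (T : ℚ_[p]) ≠ 0 := by
    rw [ne_eq, PadicInt.coe_eq_zero, ← norm_eq_zero, hT]
    exact one_ne_zero
  have hclose : ∀ z : ℤ_[p], ‖z - T‖ < 1 → ‖(z : ℚ_[p]) / T - 1‖ < 1 := fun z hz => by
    rwa [← div_self hT0, norm_coe_div_sub_coe_div hT]
  calc _ ≤ ‖(x : ℚ_[p]) / T - (y : ℚ_[p]) / T‖ :=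
        norm_padicPow_sub_le s (hclose x hxT) (hclose y hyT)
    _ = ‖x - y‖ := norm_coe_div_sub_coe_div hT

/-- For `s ∈ ℤ_p` and `p`-adic units `x, y` with `|x - y|_p < |y|_p`, one has
`|⟨x⟩^s - ⟨y⟩^s|_p ≤ |x - y|_p`; i.e. `x ↦ ⟨x⟩^s` is 1-Lipschitz on each disc
`{x : |x - y| < |y|}` with `|y| = 1`.  Here `⟨x⟩ = x / x̂`, with `x̂` the Teichmüller
representative, and `⟨x⟩^s` is the binomial series. -/
theorem proj_pow_lipschitz (p : ℕ) [Fact p.Prime] (hodd : Odd p)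
    (s : ℤ_[p]) (x y : ℤ_[p]) (hx : ‖x‖ = 1) (hy : ‖y‖ = 1) (hxy : ‖x - y‖ < ‖y‖) :
    ‖padicPow p s ((x : ℚ_[p]) / ((teich p x) : ℚ_[p])) -
        padicPow p s ((y : ℚ_[p]) / ((teich p y) : ℚ_[p]))‖ ≤ ‖x - y‖ :=
  proj_pow_lipschitz_general p s x y hy hxy
end
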